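/- Let c be an equilibrium under the variety-seeking utility U_τ on a finite simple graph G with minimum degree δ, and fix r with 1 ≤ r ≤ δ − 1. Then the number of types i ∈ Fin t for which there exists a vertex v with c(v) = i having exactly r incident colorful edges is at most r² + 2r. -/

import Mathlib

open SimpleGraph Finset

/-- The coloring obtained from `c` by swapping the colors (agents) at `u` and `v`. -/
def swapColoring {V : Type*} [DecidableEq V] {t : ℕ} (c : V → Fin t) (u v : V) : V → Fin t :=
  fun w => if w = u then c v else if w = v then c u else c w

/-- The binary utility `U_b`: 1 if some neighbor has a different type, 0 otherwise. -/
def Ub {V : Type*} [Fintype V] (G : SimpleGraph V) [DecidableRel G.Adj]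
    {t : ℕ} (c : V → Fin t) (v : V) : ℕ :=
  if ∃ w ∈ G.neighborFinset v, c w ≠ c v then 1 else 0

/-- The difference-seeking utility `U_#`: the number of neighbors of a different type. -/
def Usharp {V : Type*} [Fintype V] (G : SimpleGraph V) [DecidableRel G.Adj]
    {t : ℕ} (c : V → Fin t) (v : V) : ℕ :=
  ((G.neighborFinset v).filter fun w => c w ≠ c v).card

/-- `T_c(v)`: the set of types present in the neighborhood of `v`. -/
def typesIn {V : Type*} [Fintype V] (G : SimpleGraph V) [DecidableRel G.Adj]
    {t : ℕ} (c : V → Fin t) (v : V) : Finset (Fin t) :=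
  (G.neighborFinset v).image c

/-- The variety-seeking utility `U_τ`: the number of types other than `c v` in the
neighborhood of `v`. -/
def Utau {V : Type*} [Fintype V] (G : SimpleGraph V) [DecidableRel G.Adj]
    {t : ℕ} (c : V → Fin t) (v : V) : ℕ :=
  ((typesIn G c v).erase (c v)).card

/-- The swap of `u` and `v` is improving under utility `U`. -/
def ImprovingSwap {V : Type*} [DecidableEq V] {t : ℕ}
    (U : (V → Fin t) → V → ℕ) (c : V → Fin t) (u v : V) : Prop :=
  U c u < U (swapColoring c u v) v ∧ U c v < U (swapColoring c u v) u

/-- `c` is an equilibrium under the utility `U`: no improving swap exists. -/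
def Equilibrium {V : Type*} [DecidableEq V] {t : ℕ}
    (U : (V → Fin t) → V → ℕ) (c : V → Fin t) : Prop :=
  ∀ u v : V, c u ≠ c v → ¬ ImprovingSwap U c u v

/-- The number of monochromatic edges of `c`. -/
def monoCount {V : Type*} [Fintype V] [DecidableEq V] (G : SimpleGraph V) [DecidableRel G.Adj]
    {t : ℕ} (c : V → Fin t) : ℕ :=
  (G.edgeFinset.filter fun e => (e.map c).IsDiag).card

/-- The number of colorful edges of `c`. -/
def ceCount {V : Type*} [Fintype V] [DecidableEq V] (G : SimpleGraph V) [DecidableRel G.Adj]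
    {t : ℕ} (c : V → Fin t) : ℕ :=
  (G.edgeFinset.filter fun e => ¬ (e.map c).IsDiag).card

/-- The cycle graph on `ZMod n`: `i` adjacent to `i + 1` and `i - 1`. -/
def cycleZMod (n : ℕ) : SimpleGraph (ZMod n) := SimpleGraph.circulantGraph {1}

instance (n : ℕ) : DecidableRel (cycleZMod n).Adj := fun a b =>
  decidable_of_iff (a ≠ b ∧ (a - b = 1 ∨ b - a = 1)) (by simp [cycleZMod])

instance {α β : Type*} (G : SimpleGraph α) (H : SimpleGraph β)
    [DecidableRel G.Adj] [DecidableRel H.Adj] [DecidableEq α] [DecidableEq β] :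
    DecidableRel (G □ H).Adj := fun x y =>
  decidable_of_iff (G.Adj x.1 y.1 ∧ x.2 = y.2 ∨ H.Adj x.2 y.2 ∧ x.1 = y.1)
    (SimpleGraph.boxProd_adj).symm

/-!
Let `v` be an agent with exactly `r` colorful edges, `1 ≤ r < δ`. Then `v` has a neighbor of its own
type and `1 ≤ U_τ(v) ≤ r`. Fix `k` and pick, for each type, one such agent of utility `k`. For two
of them, `u` and `v`, of different types, the equilibrium condition forces one to have the other's
type in its neighborhood: otherwise swapping them gives each utility `k + 1`. Each representative
sees only `k` foreign types, so at most `2k + 1` types have one of utility `k`, and summing over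
`k = 1, …, r` gives `r² + 2r`.
-/

/-- Read `B i` as the out-neighbors of `i`: a digraph on `A` with an arc between any two vertices
has at least `#A (#A - 1) / 2` arcs, while out-degrees at most `k` allow at most `k #A`. -/
lemma Finset.card_le_two_mul_add_one_of_forall_mem_or_mem {α : Type*} [DecidableEq α]
    (A : Finset α) (B : α → Finset α) (k : ℕ) (hB : ∀ i ∈ A, #(B i) ≤ k)
    (hAB : ∀ i ∈ A, ∀ j ∈ A, i ≠ j → j ∈ B i ∨ i ∈ B j) :
    #A ≤ 2 * k + 1 := by
  have harcs : #(A.sigma B) ≤ #A * k := by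
    rw [card_sigma]
    simpa using sum_le_card_nsmul A _ k hB
  have hcover : A.offDiag ⊆
      (A.sigma B).image (fun p => (p.1, p.2)) ∪ (A.sigma B).image (fun p => (p.2, p.1)) := by
    rintro ⟨i, j⟩ hij
    obtain ⟨hi, hj, hne⟩ := mem_offDiag.mp hij
    rcases hAB i hi j hj hne with h | h
    · exact mem_union_left _ (mem_image.mpr ⟨⟨i, j⟩, mem_sigma.mpr ⟨hi, h⟩, rfl⟩)
    · exact mem_union_right _ (mem_image.mpr ⟨⟨j, i⟩, mem_sigma.mpr ⟨hj, h⟩, rfl⟩)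
  have hoff : #A * #A - #A ≤ #A * k + #A * k := calc
    #A * #A - #A = #A.offDiag := (offDiag_card A).symm
    _ ≤ #(A.sigma B) + #(A.sigma B) := (card_le_card hcover).trans <|
      (card_union_le _ _).trans (add_le_add card_image_le card_image_le)
    _ ≤ #A * k + #A * k := add_le_add harcs harcs
  by_contra! h
  have hlt : #A * (2 * k + 1) < #A * #A := Nat.mul_lt_mul_of_pos_left h (by omega)
  have hexp : #A * (2 * k + 1) = #A * k + #A * k + #A := by ring
  omega

lemma Finset.sum_Icc_two_mul_add_one (r : ℕ) : ∑ k ∈ Icc 1 r, (2 * k + 1) = r ^ 2 + 2 * r := by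
  induction r with
  | zero => simp
  | succ n ih => rw [sum_Icc_succ_top (by omega), ih]; ring

section

variable {V : Type*} {t : ℕ}

lemma swapColoring_comm [DecidableEq V] (c : V → Fin t) (u v : V) :
    swapColoring c u v = swapColoring c v u := by
  ext w
  unfold swapColoring
  split_ifs <;> simp_all

lemma swapColoring_apply_right [DecidableEq V] (c : V → Fin t) {u v : V} (h : u ≠ v) :
    swapColoring c u v v = c u := by
  simp [swapColoring, h.symm]

variable [Fintype V] {G : SimpleGraph V} [DecidableRel G.Adj] {c : V → Fin t} {u v : V}

lemma typesIn_swapColoring_right [DecidableEq V] (huv : ¬ G.Adj u v) :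
    typesIn G (swapColoring c u v) v = typesIn G c v := by
  refine image_congr fun w hw => ?_
  have hwv : G.Adj v w := (G.mem_neighborFinset v w).mp hw
  have hwu : w ≠ u := by rintro rfl; exact huv hwv.symm
  simp [swapColoring, hwu, hwv.ne.symm]

lemma Utau_swapColoring_right [DecidableEq V] (huv : ¬ G.Adj u v) (hne : u ≠ v) :
    Utau G (swapColoring c u v) v = #((typesIn G c v).erase (c u)) := by
  rw [Utau, typesIn_swapColoring_right huv, swapColoring_apply_right c hne]

lemma Utau_eq_card_image :
    Utau G c v = #(((G.neighborFinset v).filter fun w => c w ≠ c v).image c) := by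
  rw [Utau, typesIn, ← filter_ne', filter_image]

lemma Utau_le_Usharp : Utau G c v ≤ Usharp G c v :=
  Utau_eq_card_image.trans_le card_image_le

lemma Utau_pos_of_Usharp_pos (h : 0 < Usharp G c v) : 0 < Utau G c v := by
  rw [Utau_eq_card_image]
  exact card_pos.mpr (image_nonempty.mpr (card_pos.mp h))

lemma mem_typesIn_self_of_Usharp_lt_degree (h : Usharp G c v < G.degree v) :
    c v ∈ typesIn G c v := by
  by_contra hv
  have hall : ∀ w ∈ G.neighborFinset v, c w ≠ c v := fun w hw hw' =>
    hv (hw' ▸ mem_image_of_mem c hw)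
  rw [Usharp, filter_true_of_mem hall, card_neighborFinset_eq_degree] at h
  exact h.false

lemma Equilibrium.mem_typesIn_or_mem_typesIn [DecidableEq V] (heq : Equilibrium (Utau G) c)
    (hne : c u ≠ c v) (hu : c u ∈ typesIn G c u) (hv : c v ∈ typesIn G c v)
    (hk : Utau G c u = Utau G c v) :
    c u ∈ typesIn G c v ∨ c v ∈ typesIn G c u := by
  by_contra! ⟨huv, hvu⟩
  have hadj : ¬ G.Adj u v := fun h =>
    huv (mem_image_of_mem c ((G.mem_neighborFinset v u).mpr h.symm))
  have huv' : u ≠ v := by rintro rfl; exact hne rfl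
  have hcu := card_erase_add_one hu
  have hcv := card_erase_add_one hv
  refine heq u v hne ⟨?_, ?_⟩
  · rw [Utau_swapColoring_right hadj huv', erase_eq_of_notMem huv]
    unfold Utau at hk ⊢
    omega
  · rw [swapColoring_comm c u v, Utau_swapColoring_right (fun h => hadj h.symm) huv'.symm,
      erase_eq_of_notMem hvu]
    unfold Utau at hk ⊢
    omega

lemma Equilibrium.card_types_le [DecidableEq V] (heq : Equilibrium (Utau G) c) (k : ℕ) :
    #{i | ∃ v, c v = i ∧ c v ∈ typesIn G c v ∧ Utau G c v = k} ≤ 2 * k + 1 := by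
  cases isEmpty_or_nonempty V
  · simp
  set A : Finset (Fin t) := {i | ∃ v, c v = i ∧ c v ∈ typesIn G c v ∧ Utau G c v = k}
  choose! f hf using fun i (hi : i ∈ A) => (mem_filter.mp hi).2
  refine card_le_two_mul_add_one_of_forall_mem_or_mem A (fun i => (typesIn G c (f i)).erase i) k
    (fun i hi => ?_) (fun i hi j hj hij => ?_)
  · obtain ⟨hci, -, hki⟩ := hf i hi
    rw [Utau, hci] at hki
    exact hki.le
  · obtain ⟨hci, hsi, hki⟩ := hf i hi
    obtain ⟨hcj, hsj, hkj⟩ := hf j hj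
    have hne : c (f i) ≠ c (f j) := by rwa [hci, hcj]
    rcases heq.mem_typesIn_or_mem_typesIn hne hsi hsj (hki.trans hkj.symm) with h | h
    · exact .inr (mem_erase.mpr ⟨hij, hci ▸ h⟩)
    · exact .inl (mem_erase.mpr ⟨hij.symm, hcj ▸ h⟩)

end

theorem stmt7_general {V : Type*} [Fintype V] [DecidableEq V] (G : SimpleGraph V) [DecidableRel G.Adj]
    {t : ℕ} (c : V → Fin t) (heq : Equilibrium (Utau G) c)
    (r : ℕ) (hr1 : 1 ≤ r) (hr2 : r ≤ G.minDegree - 1) :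
    ((Finset.univ : Finset (Fin t)).filter fun i =>
        ∃ v : V, c v = i ∧ Usharp G c v = r).card ≤ r ^ 2 + 2 * r := by
  have hcover : ((Finset.univ : Finset (Fin t)).filter fun i =>
        ∃ v : V, c v = i ∧ Usharp G c v = r) ⊆
      (Icc 1 r).biUnion fun k => {i | ∃ v, c v = i ∧ c v ∈ typesIn G c v ∧ Utau G c v = k} := by
    simp only [subset_iff, mem_filter, mem_univ, true_and, mem_biUnion, mem_Icc]
    rintro _ ⟨v, rfl, hv⟩
    have hdeg : Usharp G c v < G.degree v := by have := G.minDegree_le_degree v; omega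
    exact ⟨Utau G c v, ⟨Utau_pos_of_Usharp_pos (by omega), hv ▸ Utau_le_Usharp⟩,
      v, rfl, mem_typesIn_self_of_Usharp_lt_degree hdeg, rfl⟩
  calc _ ≤ _ := card_le_card hcover
    _ ≤ ∑ k ∈ Icc 1 r, (2 * k + 1) :=
      card_biUnion_le.trans (sum_le_sum fun k _ => heq.card_types_le k)
    _ = r ^ 2 + 2 * r := sum_Icc_two_mul_add_one r

theorem stmt7 {V : Type*} [Fintype V] [DecidableEq V] (G : SimpleGraph V) [DecidableRel G.Adj]
    {t : ℕ} (ht : 2 ≤ t) (c : V → Fin t) (heq : Equilibrium (Utau G) c)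
    (r : ℕ) (hr1 : 1 ≤ r) (hr2 : r ≤ G.minDegree - 1) :
    ((Finset.univ : Finset (Fin t)).filter fun i =>
        ∃ v : V, c v = i ∧ Usharp G c v = r).card ≤ r ^ 2 + 2 * r :=
  stmt7_general G c heq r hr1 hr2
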